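/- Let a ∈ (0,1) and define F₂(β) = (β/√(1+β²))·(π − arcsin√((1−a²)(1+β²))) + arcsin(β·√(1−a²)/a) for β ∈ [−a/√(1−a²), a/√(1−a²)]. Then: (1) F₂ is an odd function; (2) F₂ is strictly increasing on its whole domain; (3) the range of F₂ is the segment [−(π/2)(1+a), (π/2)(1+a)]. -/

import Mathlib

open Real Set

/-- The argument function `F₂(β)` in the long-time case. -/
noncomputable def F₂ (a β : ℝ) : ℝ :=
  β / Real.sqrt (1 + β^2) * (Real.pi - Real.arcsin (Real.sqrt ((1 - a^2) * (1 + β^2)))) +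
    Real.arcsin (β * Real.sqrt (1 - a^2) / a)

/-! Each summand of `F₂ a` is odd in `β`. Inside the domain the `β²`-terms of the derivative
cancel, leaving a sum of two manifestly positive terms, so `F₂ a` is strictly increasing. At the
right endpoint `β = a / √(1 - a²)` both arcsines are `arcsin 1 = π / 2`, which gives the value
`(π / 2)(1 + a)`, and continuity gives the whole segment as the image. -/

lemma hasDerivAt_div_sqrt_one_add_sq (x : ℝ) :
    HasDerivAt (fun y => y / √(1 + y ^ 2)) (1 / √(1 + x ^ 2) ^ 3) x := by
  have hpos : 0 < 1 + x ^ 2 := by positivity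
  have hs := ((hasDerivAt_pow 2 x).const_add 1).sqrt hpos.ne'
  refine ((hasDerivAt_id x).div hs (sqrt_pos.2 hpos).ne').congr_deriv ?_
  have hs0 := sqrt_pos.2 hpos
  have hs2 := sq_sqrt hpos.le
  simp only [id, Nat.cast_ofNat, Nat.add_one_sub_one, pow_one]
  field_simp
  linear_combination hs2

lemma hasDerivAt_arcsin_mul_sqrt_one_add_sq {c x : ℝ} (hc : 0 ≤ c)
    (h : c ^ 2 * (1 + x ^ 2) < 1) :
    HasDerivAt (fun y => arcsin (c * √(1 + y ^ 2)))
      (c * x / (√(1 + x ^ 2) * √(1 - c ^ 2 * (1 + x ^ 2)))) x := by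
  have hpos : 0 < 1 + x ^ 2 := by positivity
  have hs0 := sqrt_pos.2 hpos
  have hlt : c * √(1 + x ^ 2) < 1 := by
    rw [← abs_of_nonneg (by positivity : 0 ≤ c * √(1 + x ^ 2)), ← sq_lt_one_iff_abs_lt_one,
      mul_pow, sq_sqrt hpos.le]
    exact h
  have hs := (((hasDerivAt_pow 2 x).const_add 1).sqrt hpos.ne').const_mul c
  refine ((hasDerivAt_arcsin (by nlinarith) hlt.ne).comp x hs).congr_deriv ?_
  rw [mul_pow, sq_sqrt hpos.le]
  simp only [Nat.cast_ofNat, Nat.add_one_sub_one, pow_one]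
  field_simp

lemma hasDerivAt_arcsin_mul_div {a k x : ℝ} (ha : 0 < a) (h : k ^ 2 * x ^ 2 < a ^ 2) :
    HasDerivAt (fun y => arcsin (y * k / a)) (k / √(a ^ 2 - k ^ 2 * x ^ 2)) x := by
  have hlt : |x * k / a| < 1 := by
    rw [← sq_lt_one_iff_abs_lt_one, div_pow, div_lt_one (by positivity)]; linarith
  have hq : √(1 - (x * k / a) ^ 2) = √(a ^ 2 - k ^ 2 * x ^ 2) / a := by
    rw [div_pow, ← sqrt_sq ha.le, ← sqrt_div' _ (sq_nonneg a), sqrt_sq ha.le]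
    congr 1; field_simp
  refine ((hasDerivAt_arcsin (abs_lt.mp hlt).1.ne' (abs_lt.mp hlt).2.ne).comp x
    ((hasDerivAt_mul_const k).div_const a)).congr_deriv ?_
  rw [hq]
  field_simp

lemma mul_sq_lt_sq_of_abs_lt_div_sqrt {a k x : ℝ} (hk : 0 < k) (h : |x| < a / √k) :
    k * x ^ 2 < a ^ 2 := by
  have hlt : |x| * √k < a := (lt_div_iff₀ (sqrt_pos.2 hk)).1 h
  calc k * x ^ 2 = (|x| * √k) ^ 2 := by rw [mul_pow, sq_abs, sq_sqrt hk.le, mul_comm]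
    _ < a ^ 2 := pow_lt_pow_left₀ hlt (by positivity) two_ne_zero

lemma F₂_neg (a β : ℝ) : F₂ a (-β) = -F₂ a β := by
  simp only [F₂, neg_sq, neg_mul, neg_div, arcsin_neg]
  ring

lemma continuous_F₂ (a : ℝ) : Continuous (F₂ a) := by
  have hs : ∀ β : ℝ, √(1 + β ^ 2) ≠ 0 := fun β => (sqrt_pos.2 (by positivity)).ne'
  unfold F₂
  fun_prop (disch := exact hs _)

lemma hasDerivAt_F₂ {a x : ℝ} (ha : 0 < a) (ha1 : a ^ 2 ≤ 1) (hx : (1 - a ^ 2) * x ^ 2 < a ^ 2) :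
    HasDerivAt (F₂ a)
      ((π - arcsin √((1 - a ^ 2) * (1 + x ^ 2))) / √(1 + x ^ 2) ^ 3
        + √(1 - a ^ 2) / ((1 + x ^ 2) * √(a ^ 2 - (1 - a ^ 2) * x ^ 2))) x := by
  have hc2 : √(1 - a ^ 2) ^ 2 = 1 - a ^ 2 := sq_sqrt (by linarith)
  have hF : F₂ a = fun β => β / √(1 + β ^ 2) * (π - arcsin (√(1 - a ^ 2) * √(1 + β ^ 2))) +
      arcsin (β * √(1 - a ^ 2) / a) := by
    funext β; rw [F₂, sqrt_mul (by linarith)]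
  have h1 := hasDerivAt_arcsin_mul_sqrt_one_add_sq (sqrt_nonneg (1 - a ^ 2)) (x := x)
    (by rw [hc2]; linarith)
  have h2 := hasDerivAt_arcsin_mul_div ha (k := √(1 - a ^ 2)) (x := x) (by rw [hc2]; linarith)
  rw [hF]
  refine (((hasDerivAt_div_sqrt_one_add_sq x).mul (h1.const_sub π)).add h2).congr_deriv ?_
  have hpos : 0 < 1 + x ^ 2 := by positivity
  have hs0 := sqrt_pos.2 hpos
  have hs2 := sq_sqrt hpos.le
  have hq0 : 0 < √(a ^ 2 - (1 - a ^ 2) * x ^ 2) := sqrt_pos.2 (by linarith)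
  rw [← sqrt_mul (by linarith), hc2,
    show 1 - (1 - a ^ 2) * (1 + x ^ 2) = a ^ 2 - (1 - a ^ 2) * x ^ 2 by ring]
  generalize √(a ^ 2 - (1 - a ^ 2) * x ^ 2) = q at hq0 ⊢
  field_simp
  linear_combination x ^ 2 * √(1 + x ^ 2) * √(1 - a ^ 2) * hs2

lemma strictMonoOn_F₂ {a : ℝ} (ha : a ∈ Ioo 0 1) :
    StrictMonoOn (F₂ a) (Icc (-(a / √(1 - a ^ 2))) (a / √(1 - a ^ 2))) := by
  obtain ⟨ha0, ha1⟩ := ha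
  have hk : 0 < 1 - a ^ 2 := by nlinarith
  refine strictMonoOn_of_deriv_pos (convex_Icc _ _) (continuous_F₂ a).continuousOn fun x hx => ?_
  rw [interior_Icc, mem_Ioo, ← abs_lt] at hx
  have hx' := mul_sq_lt_sq_of_abs_lt_div_sqrt hk hx
  rw [(hasDerivAt_F₂ ha0 (by nlinarith) hx').deriv]
  have hq0 : 0 < √(a ^ 2 - (1 - a ^ 2) * x ^ 2) := sqrt_pos.2 (by linarith)
  have hP : 0 < π - arcsin √((1 - a ^ 2) * (1 + x ^ 2)) := by
    linarith [arcsin_le_pi_div_two √((1 - a ^ 2) * (1 + x ^ 2)), pi_pos]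
  have := sqrt_pos.2 hk
  positivity

lemma F₂_div_sqrt_one_sub_sq {a : ℝ} (ha : a ∈ Ioo 0 1) :
    F₂ a (a / √(1 - a ^ 2)) = π / 2 * (1 + a) := by
  obtain ⟨ha0, ha1⟩ := ha
  have hk : 0 < 1 - a ^ 2 := by nlinarith
  have hc0 : 0 < √(1 - a ^ 2) := sqrt_pos.2 hk
  have hc2 : √(1 - a ^ 2) ^ 2 = 1 - a ^ 2 := sq_sqrt hk.le
  have hs : 1 + (a / √(1 - a ^ 2)) ^ 2 = (1 / √(1 - a ^ 2)) ^ 2 := by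
    field_simp; linarith
  have hcs : (1 - a ^ 2) * (1 + (a / √(1 - a ^ 2)) ^ 2) = 1 := by
    rw [hs, div_pow, one_pow, hc2, mul_one_div_cancel hk.ne']
  rw [F₂, hcs, sqrt_one, arcsin_one, hs, sqrt_sq (by positivity),
    div_mul_cancel₀ _ hc0.ne', div_self ha0.ne', arcsin_one]
  field_simp
  ring

/-- `F₂` is odd, strictly increasing on its domain `[−a/√(1−a²), a/√(1−a²)]`, with range
`[−(π/2)(1+a), (π/2)(1+a)]`. -/
theorem F₂_properties (a : ℝ) (ha : a ∈ Set.Ioo (0:ℝ) 1) :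
    (∀ β : ℝ, F₂ a (-β) = -(F₂ a β)) ∧
    StrictMonoOn (F₂ a) (Set.Icc (-(a / Real.sqrt (1 - a^2))) (a / Real.sqrt (1 - a^2))) ∧
    F₂ a '' Set.Icc (-(a / Real.sqrt (1 - a^2))) (a / Real.sqrt (1 - a^2)) =
      Set.Icc (-(Real.pi / 2 * (1 + a))) (Real.pi / 2 * (1 + a)) := by
  have hb : -(a / √(1 - a ^ 2)) ≤ a / √(1 - a ^ 2) := by
    have : 0 ≤ a / √(1 - a ^ 2) := div_nonneg ha.1.le (sqrt_nonneg _)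
    linarith
  refine ⟨F₂_neg a, strictMonoOn_F₂ ha, ?_⟩
  rw [(continuous_F₂ a).continuousOn.image_Icc_of_monotoneOn hb (strictMonoOn_F₂ ha).monotoneOn,
    F₂_neg, F₂_div_sqrt_one_sub_sq ha]
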